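/- arXiv:1903.00139 — 4 statements merged into one kernel-verified Lean document; each statement's English description precedes it below -/
import Mathlib

section
/- Let X be an upward skip-free Markov chain on {-1, 0, 1, ..., a} with -1 and a absorbing, let (λ_i)_{i=0}^{a-1} be the eigenvalues of P restricted to [0, a-1], all real with λ_i < 1. Then the probability generating function of the first hitting time of a started from 0, restricted to paths avoiding -1, is E_0[q^{T_a} 1{T_a < T_{-1}}] = P_0(T_a < T_{-1}) · ∏_{i=0}^{a-1} ((1-λ_i)q/(1-λ_i q)), and P_0(T_a < T_{-1}) = p(0,1)···p(a-1,a)/((1-λ_0)···(1-λ_{a-1})). -/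
open scoped BigOperators
open Polynomial

/-- `avoidHit p a n x = ℙ_x(T_a = n, T_a < T_{-1})` for the chain with kernel `p`,
where `-1` and `a` are absorbing. -/
noncomputable def avoidHit (p : ℤ → ℤ → ℝ) (a : ℤ) : ℕ → ℤ → ℝ
  | 0, x => if x = a then 1 else 0
  | n + 1, x => if x = a ∨ x = -1 then 0 else ∑' z : ℤ, p x z * avoidHit p a n z

/-!
For `0 < q ≤ 1` the generating functions `u x = 𝔼_x[q^{T_a} 1{T_a < T_{-1}}]`, `0 ≤ x < a`,
solve the first-step system `(1 - q P) u = q p(·, a)`; they are finite because the hitting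
probabilities sum to at most one. By the eigenvalue hypothesis `det (1 - q P) = ∏ (1 - λ_i q)`.
In Cramer's rule for `u 0` the new column `q p(·, a)` vanishes except in the last row, by
skip-freeness, and expanding along it leaves a lower triangular minor with diagonal
`-q p(i, i + 1)`; hence `u 0 = q^a p(0,1)⋯p(a-1,a) / ∏ (1 - λ_i q)`. Taking `q = 1` gives
`ℙ_0(T_a < T_{-1})`, and the quotient of the two formulas is the product of the
`(1 - λ_i) q / (1 - λ_i q)`.
-/

open Finset Matrix

lemma tsum_int_eq_of_support_subset_Icc {a : ℕ} {f : ℤ → ℝ}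
    (hf : ∀ z, f z ≠ 0 → -1 ≤ z ∧ z ≤ a) :
    ∑' z, f z = f (-1) + ∑ k : Fin a, f (k : ℕ) + f a := by
  have hIcc : Icc (-1 : ℤ) a = insert (-1) ((range (a + 1)).map Nat.castEmbedding) := by
    ext z
    simp only [mem_Icc, mem_insert, mem_map, mem_range, Nat.castEmbedding_apply]
    refine ⟨fun h => ?_, ?_⟩
    · rcases eq_or_lt_of_le h.1 with h' | h'
      · exact Or.inl h'.symm
      · exact Or.inr ⟨z.toNat, by omega, by omega⟩
    · rintro (rfl | ⟨m, hm, rfl⟩) <;> omega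
  rw [tsum_eq_sum (s := Icc (-1 : ℤ) a) fun z hz => by_contra fun h => hz (mem_Icc.mpr (hf z h)),
    hIcc, sum_insert (by simp), sum_map, sum_range_succ, Fin.sum_univ_eq_sum_range (fun i => f i)]
  simp only [Nat.castEmbedding_apply]
  ring

theorem Matrix.det_updateCol_zero_of_lowerHessenberg {R : Type*} [CommRing R] {n : ℕ}
    (A : Matrix (Fin (n + 1)) (Fin (n + 1)) R) (b : Fin (n + 1) → R)
    (hA : ∀ i j : Fin (n + 1), (i : ℕ) + 1 < j → A i j = 0)
    (hb : ∀ i, i ≠ Fin.last n → b i = 0) :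
    (A.updateCol 0 b).det = (-1) ^ n * b (Fin.last n) * ∏ i : Fin n, A i.castSucc i.succ := by
  rw [det_succ_column_zero, Fintype.sum_eq_single (Fin.last n) fun i hi => by simp [hb i hi]]
  rw [det_of_isLowerTriangular]
  · simp [Fin.succAbove_last, Fin.succ_ne_zero]
  · intro i j hij
    simpa [Fin.succAbove_last, Fin.succ_ne_zero] using hA _ _ (by simpa using hij)

theorem Matrix.det_one_sub_smul_of_charpoly_eq_prod {K : Type*} [Field K] {n : Type*} [Fintype n]
    [DecidableEq n] {M : Matrix n n K} {lam : n → K} (h : M.charpoly = ∏ i, (X - C (lam i)))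
    (q : K) : (1 - q • M).det = ∏ i, (1 - lam i * q) := by
  rcases eq_or_ne q 0 with rfl | hq
  · simp
  have : 1 - q • M = q • (scalar n q⁻¹ - M) := by
    rw [smul_sub, scalar_apply, ← smul_one_eq_diagonal, smul_smul, mul_inv_cancel₀ hq, one_smul]
  rw [this, det_smul, ← eval_charpoly, h, eval_prod, ← Finset.card_univ, ← prod_const,
    ← prod_mul_distrib]
  refine prod_congr rfl fun i _ => ?_
  rw [eval_sub, eval_X, eval_C, mul_sub, mul_inv_cancel₀ hq, mul_comm]

theorem Matrix.cramer_mulVec {R : Type*} [CommRing R] {n : Type*} [Fintype n] [DecidableEq n]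
    (A : Matrix n n R) (x : n → R) : cramer A (A *ᵥ x) = A.det • x := by
  rw [cramer_eq_adjugate_mulVec, mulVec_mulVec, adjugate_mul, smul_mulVec, one_mulVec]

section SkipFree

variable {p : ℤ → ℤ → ℝ} {a : ℕ}

lemma avoidHit_neg_one (n : ℕ) : avoidHit p a n (-1) = 0 := by
  cases n <;> simp [avoidHit]

lemma avoidHit_natCast_self (n : ℕ) : avoidHit p a n a = if n = 0 then 1 else 0 := by
  cases n <;> simp [avoidHit]

lemma avoidHit_nonneg (hnn : ∀ x y, 0 ≤ p x y) (n : ℕ) (x : ℤ) : 0 ≤ avoidHit p a n x := by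
  induction n generalizing x with
  | zero => unfold avoidHit; positivity
  | succ n ih =>
    unfold avoidHit
    split_ifs
    exacts [le_rfl, tsum_nonneg fun z => mul_nonneg (hnn x z) (ih z)]

lemma avoidHit_succ_of_ne (hsupp : ∀ x y : ℤ, p x y ≠ 0 → -1 ≤ y ∧ y ≤ a) {x : ℤ}
    (hxa : x ≠ a) (hx : x ≠ -1) (n : ℕ) :
    avoidHit p a (n + 1) x
      = ∑ k : Fin a, p x (k : ℕ) * avoidHit p a n (k : ℕ) + p x a * if n = 0 then 1 else 0 := by
  rw [avoidHit, if_neg (by tauto), tsum_int_eq_of_support_subset_Icc fun z hz =>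
      hsupp x z (left_ne_zero_of_mul hz), avoidHit_neg_one, avoidHit_natCast_self]
  ring

lemma sum_range_avoidHit_le_one (hnn : ∀ x y, 0 ≤ p x y)
    (hsub : ∀ x : ℤ, -1 ≤ x → x ≤ a → ∑' y, p x y ≤ 1)
    (hsupp : ∀ x y : ℤ, p x y ≠ 0 → -1 ≤ y ∧ y ≤ a) (N : ℕ) :
    ∀ x : ℤ, -1 ≤ x → x ≤ a → ∑ n ∈ range N, avoidHit p a n x ≤ 1 := by
  induction N with
  | zero => intros; simp
  | succ N ih =>
    intro x hx1 hx2
    rw [sum_range_succ']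
    by_cases hx : x = a ∨ x = -1
    · have hzero : ∀ n, avoidHit p a (n + 1) x = 0 := fun n => by rw [avoidHit, if_pos hx]
      simp only [hzero, sum_const_zero, zero_add]
      unfold avoidHit; split_ifs <;> norm_num
    push Not at hx
    have h0 : avoidHit p a 0 x = 0 := by rw [avoidHit, if_neg hx.1]
    have hk : ∀ k : Fin a, ∑ n ∈ range N, avoidHit p a n (k : ℕ) ≤ 1 := fun k =>
      ih _ (by omega) (by omega)
    have hind : ∑ n ∈ range N, (if n = 0 then (1 : ℝ) else 0) ≤ 1 := by
      rw [sum_ite_eq']; split_ifs <;> norm_num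
    calc ∑ n ∈ range N, avoidHit p a (n + 1) x + avoidHit p a 0 x
        = ∑ k : Fin a, p x (k : ℕ) * ∑ n ∈ range N, avoidHit p a n (k : ℕ)
            + p x a * ∑ n ∈ range N, (if n = 0 then 1 else 0) := by
          simp only [avoidHit_succ_of_ne hsupp hx.1 hx.2, h0, add_zero, sum_add_distrib, mul_sum]
          rw [sum_comm]
      _ ≤ ∑ k : Fin a, p x (k : ℕ) + p x a := by
          gcongr with k
          · exact mul_le_of_le_one_right (hnn _ _) (hk k)
          · exact mul_le_of_le_one_right (hnn _ _) hind
      _ ≤ p x (-1) + ∑ k : Fin a, p x (k : ℕ) + p x a := by linarith [hnn x (-1)]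
      _ = ∑' y, p x y := (tsum_int_eq_of_support_subset_Icc (hsupp x)).symm
      _ ≤ 1 := hsub x hx1 hx2

lemma summable_pow_mul_avoidHit (hnn : ∀ x y, 0 ≤ p x y)
    (hsub : ∀ x : ℤ, -1 ≤ x → x ≤ a → ∑' y, p x y ≤ 1)
    (hsupp : ∀ x y : ℤ, p x y ≠ 0 → -1 ≤ y ∧ y ≤ a) {q : ℝ} (hq0 : 0 ≤ q) (hq1 : q ≤ 1)
    {x : ℤ} (hx1 : -1 ≤ x) (hx2 : x ≤ a) : Summable fun n => q ^ n * avoidHit p a n x :=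
  summable_of_sum_range_le (fun n => mul_nonneg (pow_nonneg hq0 n) (avoidHit_nonneg hnn n x))
    fun N => (sum_le_sum fun n _ => mul_le_of_le_one_left (avoidHit_nonneg hnn n x)
      (pow_le_one₀ hq0 hq1)).trans (sum_range_avoidHit_le_one hnn hsub hsupp N x hx1 hx2)

noncomputable def avoidHitGen (p : ℤ → ℤ → ℝ) (a : ℤ) (q : ℝ) (x : ℤ) : ℝ :=
  ∑' n : ℕ, q ^ n * avoidHit p a n x

lemma avoidHitGen_eq (hnn : ∀ x y, 0 ≤ p x y)
    (hsub : ∀ x : ℤ, -1 ≤ x → x ≤ a → ∑' y, p x y ≤ 1)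
    (hsupp : ∀ x y : ℤ, p x y ≠ 0 → -1 ≤ y ∧ y ≤ a) {q : ℝ} (hq0 : 0 ≤ q) (hq1 : q ≤ 1)
    (k : Fin a) :
    avoidHitGen p a q (k : ℕ)
      = q * (∑ j : Fin a, p (k : ℕ) (j : ℕ) * avoidHitGen p a q (j : ℕ) + p (k : ℕ) a) := by
  have hsum : ∀ j : Fin a, Summable fun n => q ^ n * avoidHit p a n (j : ℕ) := fun j =>
    summable_pow_mul_avoidHit hnn hsub hsupp hq0 hq1 (by omega) (by omega)
  have hka : ((k : ℕ) : ℤ) ≠ a := by omega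
  have hstep : HasSum (fun n => q ^ (n + 1) * avoidHit p a (n + 1) (k : ℕ))
      (q * (∑ j : Fin a, p (k : ℕ) (j : ℕ) * avoidHitGen p a q (j : ℕ) + p (k : ℕ) a)) := by
    refine (((hasSum_sum fun j _ => (hsum j).hasSum.mul_left (p (k : ℕ) (j : ℕ))).add
      (hasSum_ite_eq 0 (p (k : ℕ) a))).mul_left q).congr_fun fun n => ?_
    rw [avoidHit_succ_of_ne hsupp hka (by omega), pow_succ, mul_add, mul_add, mul_sum, mul_sum]
    congr 1
    · exact sum_congr rfl fun j _ => by ring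
    · split_ifs with hn <;> simp [hn]
  rw [avoidHitGen, (hsum k).tsum_eq_zero_add, hstep.tsum_eq, avoidHit, if_neg hka, mul_zero,
    zero_add]

lemma one_sub_smul_mulVec_avoidHitGen (hnn : ∀ x y, 0 ≤ p x y)
    (hsub : ∀ x : ℤ, -1 ≤ x → x ≤ a → ∑' y, p x y ≤ 1)
    (hsupp : ∀ x y : ℤ, p x y ≠ 0 → -1 ≤ y ∧ y ≤ a) {q : ℝ} (hq0 : 0 ≤ q) (hq1 : q ≤ 1)
    {M : Matrix (Fin a) (Fin a) ℝ} (hM : ∀ i j : Fin a, M i j = p ((i : ℕ) : ℤ) ((j : ℕ) : ℤ)) :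
    (1 - q • M) *ᵥ (fun k : Fin a => avoidHitGen p a q (k : ℕ))
      = fun k : Fin a => q * p (k : ℕ) a := by
  funext k
  rw [sub_mulVec, one_mulVec, smul_mulVec, Pi.sub_apply, Pi.smul_apply,
    avoidHitGen_eq hnn hsub hsupp hq0 hq1 k]
  simp only [mulVec, dotProduct, hM, smul_eq_mul]
  ring

lemma det_updateCol_zero_one_sub_smul {n : ℕ} (hskip : ∀ x y : ℤ, x + 2 ≤ y → p x y = 0)
    {M : Matrix (Fin (n + 1)) (Fin (n + 1)) ℝ}
    (hM : ∀ i j : Fin (n + 1), M i j = p ((i : ℕ) : ℤ) ((j : ℕ) : ℤ)) (q : ℝ) :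
    ((1 - q • M).updateCol 0 fun k : Fin (n + 1) => q * p (k : ℕ) (n + 1 : ℕ)).det
      = q ^ (n + 1) * ∏ i : Fin (n + 1), p (i : ℕ) ((i : ℕ) + 1) := by
  set A : Matrix (Fin (n + 1)) (Fin (n + 1)) ℝ := 1 - q • M
  have hA : ∀ i j : Fin (n + 1), (i : ℕ) + 1 < j → A i j = 0 := fun i j hij => by
    simp [A, hM, one_apply_ne (Fin.ne_of_val_ne (by omega : (i : ℕ) ≠ j)),
      hskip _ _ (by omega : ((i : ℕ) : ℤ) + 2 ≤ (j : ℕ))]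
  have hsuper : ∀ i : Fin n, A i.castSucc i.succ = -q * p (i : ℕ) ((i : ℕ) + 1) := fun i => by
    simp [A, hM, one_apply_ne Fin.castSucc_lt_succ.ne]
  rw [det_updateCol_zero_of_lowerHessenberg A _ hA fun i hi => by
    rw [hskip _ _ (by have := Fin.val_lt_last hi; omega), mul_zero]]
  simp only [hsuper, prod_mul_distrib, prod_const, card_univ, Fintype.card_fin,
    Fin.prod_univ_castSucc, Fin.val_last, Fin.val_castSucc]
  push_cast
  have hsign : (-1 : ℝ) ^ n * (-q) ^ n = q ^ n := by rw [← mul_pow, neg_one_mul, neg_neg]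
  linear_combination q * p n (n + 1) * (∏ i : Fin n, p (i : ℕ) ((i : ℕ) + 1)) * hsign

lemma avoidHitGen_zero_eq (ha : 0 < a) (hnn : ∀ x y, 0 ≤ p x y)
    (hsub : ∀ x : ℤ, -1 ≤ x → x ≤ a → ∑' y, p x y ≤ 1)
    (hsupp : ∀ x y : ℤ, p x y ≠ 0 → -1 ≤ y ∧ y ≤ a)
    (hskip : ∀ x y : ℤ, x + 2 ≤ y → p x y = 0)
    {lam : Fin a → ℝ} (hlam : ∀ i, lam i < 1)
    {M : Matrix (Fin a) (Fin a) ℝ} (hM : ∀ i j : Fin a, M i j = p ((i : ℕ) : ℤ) ((j : ℕ) : ℤ))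
    (hchar : M.charpoly = ∏ i, (X - C (lam i))) {q : ℝ} (hq0 : 0 < q) (hq1 : q ≤ 1) :
    avoidHitGen p a q 0
      = q ^ a * (∏ i : Fin a, p (i : ℕ) ((i : ℕ) + 1)) / ∏ i, (1 - lam i * q) := by
  obtain ⟨n, rfl⟩ : ∃ n, a = n + 1 := ⟨a - 1, by omega⟩
  set A : Matrix (Fin (n + 1)) (Fin (n + 1)) ℝ := 1 - q • M
  have hdet : A.det = ∏ i, (1 - lam i * q) := det_one_sub_smul_of_charpoly_eq_prod hchar q
  have hD : ∏ i, (1 - lam i * q) ≠ 0 := (prod_pos fun i _ => by nlinarith [hlam i]).ne'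
  have hcramer : A.det * avoidHitGen p (n + 1 : ℕ) q 0
      = (A.updateCol 0 fun k : Fin (n + 1) => q * p (k : ℕ) (n + 1 : ℕ)).det := by
    have := congr_fun (cramer_mulVec A fun k : Fin (n + 1) => avoidHitGen p (n + 1 : ℕ) q k) 0
    rw [one_sub_smul_mulVec_avoidHitGen hnn hsub hsupp hq0.le hq1 hM, cramer_apply] at this
    simpa only [Pi.smul_apply, smul_eq_mul, Fin.val_zero, Nat.cast_zero] using this.symm
  rw [eq_div_iff hD, ← hdet, mul_comm, hcramer, det_updateCol_zero_one_sub_smul hskip hM]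

end SkipFree

theorem skipfree_upward_hitting_eigen_general
    (a : ℕ) (ha : 0 < a) (p : ℤ → ℤ → ℝ)
    (hnn : ∀ x y, 0 ≤ p x y)
    (hrow : ∀ x : ℤ, -1 ≤ x → x ≤ (a : ℤ) → ∑' y : ℤ, p x y = 1)
    (hsupp : ∀ x y : ℤ, p x y ≠ 0 → -1 ≤ y ∧ y ≤ (a : ℤ))
    (hskip : ∀ x y : ℤ, x + 2 ≤ y → p x y = 0)
    (lam : Fin a → ℝ) (hlam : ∀ i, lam i < 1)
    (M : Matrix (Fin a) (Fin a) ℝ)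
    (hM : ∀ i j : Fin a, M i j = p ((i : ℕ) : ℤ) ((j : ℕ) : ℤ))
    (hchar : M.charpoly = ∏ i, (X - Polynomial.C (lam i)))
    (q : ℝ) (hq : q ∈ Set.Ioo (0 : ℝ) 1) :
    (∑' n : ℕ, q ^ n * avoidHit p a n 0)
        = (∑' n : ℕ, avoidHit p a n 0) * ∏ i, ((1 - lam i) * q / (1 - lam i * q)) ∧
      (∑' n : ℕ, avoidHit p a n 0)
        = (∏ i : Fin a, p ((i : ℕ) : ℤ) (((i : ℕ) : ℤ) + 1)) / ∏ i, (1 - lam i) := by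
  have hsub : ∀ x : ℤ, -1 ≤ x → x ≤ a → ∑' y, p x y ≤ 1 := fun x h₁ h₂ => (hrow x h₁ h₂).le
  have hgen : ∀ {t : ℝ}, 0 < t → t ≤ 1 → avoidHitGen p a t 0
      = t ^ a * (∏ i : Fin a, p (i : ℕ) ((i : ℕ) + 1)) / ∏ i, (1 - lam i * t) :=
    avoidHitGen_zero_eq ha hnn hsub hsupp hskip hlam hM hchar
  have hprob : ∑' n : ℕ, avoidHit p a n 0
      = (∏ i : Fin a, p (i : ℕ) ((i : ℕ) + 1)) / ∏ i, (1 - lam i) := by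
    simpa [avoidHitGen] using hgen one_pos le_rfl
  refine ⟨?_, hprob⟩
  have hD : ∏ i, (1 - lam i * q) ≠ 0 :=
    (prod_pos fun i _ => by nlinarith [hlam i, hq.1, hq.2]).ne'
  have hD₁ : ∏ i, (1 - lam i) ≠ 0 := (prod_pos fun i _ => sub_pos.mpr (hlam i)).ne'
  rw [show ∑' n : ℕ, q ^ n * avoidHit p a n 0 = avoidHitGen p a q 0 from rfl,
    hgen hq.1 hq.2.le, hprob, prod_div_distrib, prod_mul_distrib, prod_const, card_univ,
    Fintype.card_fin, div_mul_div_comm, div_eq_div_iff hD (mul_ne_zero hD₁ hD)]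
  ring

/-- Fill's formula (extended to substochastic matrices) : for an upward skip-free chain on
`{-1, 0, …, a}` with `-1` and `a` absorbing and `(λ_i)` the eigenvalues of `P` restricted to
`[0, a-1]`, `𝔼_0[q^{T_a} 1_{T_a < T_{-1}}] = ℙ_0(T_a < T_{-1}) ∏_i (1-λ_i)q/(1-λ_i q)` and
`ℙ_0(T_a < T_{-1}) = p(0,1)⋯p(a-1,a) / ((1-λ_0)⋯(1-λ_{a-1}))`. -/
theorem skipfree_upward_hitting_eigen
    (a : ℕ) (ha : 0 < a) (p : ℤ → ℤ → ℝ)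
    (hnn : ∀ x y, 0 ≤ p x y)
    (hrow : ∀ x : ℤ, -1 ≤ x → x ≤ (a : ℤ) → ∑' y : ℤ, p x y = 1)
    (hsupp : ∀ x y : ℤ, p x y ≠ 0 → -1 ≤ y ∧ y ≤ (a : ℤ))
    (hup : ∀ x : ℤ, 0 ≤ x → x < (a : ℤ) → 0 < p x (x + 1))
    (hskip : ∀ x y : ℤ, x + 2 ≤ y → p x y = 0)
    (habs1 : p (-1) (-1) = 1) (habs2 : p a a = 1)
    (lam : Fin a → ℝ) (hlam : ∀ i, lam i < 1)
    (M : Matrix (Fin a) (Fin a) ℝ)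
    (hM : ∀ i j : Fin a, M i j = p ((i : ℕ) : ℤ) ((j : ℕ) : ℤ))
    (hchar : M.charpoly = ∏ i, (X - Polynomial.C (lam i)))
    (q : ℝ) (hq : q ∈ Set.Ioo (0 : ℝ) 1) :
    (∑' n : ℕ, q ^ n * avoidHit p a n 0)
        = (∑' n : ℕ, avoidHit p a n 0) * ∏ i, ((1 - lam i) * q / (1 - lam i * q)) ∧
      (∑' n : ℕ, avoidHit p a n 0)
        = (∏ i : Fin a, p ((i : ℕ) : ℤ) (((i : ℕ) : ℤ) + 1)) / ∏ i, (1 - lam i) :=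
  skipfree_upward_hitting_eigen_general a ha p hnn hrow hsupp hskip lam hlam M hM hchar q hq
end

section
/- Let P be a finite stochastic matrix that is similar to a birth-death transition matrix Q via PΛ = ΛQ with Λ invertible, and suppose P is normal with respect to the π-inner product (P P̂ = P̂ P where P̂ is the π-adjoint). Then P is self-adjoint: P = P̂. -/
/-!
Reversibility of `Q` makes `D Q D⁻¹` symmetric for `D = diag √πQ`, so `Q`, and with it the
similar matrix `P`, is diagonalizable over `ℝ`. Since `P̂` is the adjoint of `P` for the inner
product `⟨u, v⟩_π = ∑ π i u i v i`, normality forces every real eigenvector of `P` to be an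
eigenvector of `P̂` with the same eigenvalue; hence `P` and `P̂` agree on a basis.
-/

open scoped BigOperators

/-- A birth-death transition matrix : stochastic, tridiagonal, with positive
off-diagonal entries. -/
def IsBirthDeath {n : ℕ} (Q : Matrix (Fin n) (Fin n) ℝ) : Prop :=
  (∀ i j, 0 ≤ Q i j) ∧ (∀ i, ∑ j, Q i j = 1) ∧
    (∀ i j : Fin n, 2 ≤ |(i : ℤ) - (j : ℤ)| → Q i j = 0) ∧
    (∀ i j : Fin n, |(i : ℤ) - (j : ℤ)| = 1 → 0 < Q i j)

open Matrix

namespace Matrix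

variable {n K : Type*} [Fintype n]

theorem mulVec_eq_smul_of_adjoint_of_commute {W A B : Matrix n n ℝ} (hW : W.PosDef)
    (hadj : W * B = Aᵀ * W) (hcomm : A * B = B * A) {μ : ℝ} {v : n → ℝ}
    (hv : A *ᵥ v = μ • v) : B *ᵥ v = μ • v := by
  have hadj' : Bᵀ * W = W * A := by
    have hWT : Wᵀ = W := hW.isHermitian
    rw [← hWT, ← transpose_mul, hadj, transpose_mul, transpose_transpose, hWT]
  set u := B *ᵥ v - μ • v
  have hu : A *ᵥ u = μ • u := by
    rw [mulVec_sub, mulVec_mulVec, hcomm, ← mulVec_mulVec, hv, mulVec_smul, mulVec_smul, hv,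
      smul_sub, smul_comm]
  have hBv : (B *ᵥ v) ⬝ᵥ (W *ᵥ u) = μ * (v ⬝ᵥ (W *ᵥ u)) := by
    rw [← vecMul_transpose, ← dotProduct_mulVec, mulVec_mulVec, hadj', ← mulVec_mulVec, hu,
      mulVec_smul, dotProduct_smul, smul_eq_mul]
  have hzero : u ⬝ᵥ (W *ᵥ u) = 0 := by
    rw [sub_dotProduct, hBv, smul_dotProduct, smul_eq_mul, sub_self]
  have hu0 : u = 0 := by
    by_contra hne
    simpa [hzero] using hW.dotProduct_mulVec_pos hne
  exact sub_eq_zero.1 hu0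

variable [DecidableEq n]

def IsDiagonalizable [CommRing K] (A : Matrix n n K) : Prop :=
  ∃ M : Matrix n n K, IsUnit M ∧ ∃ d : n → K, A * M = M * diagonal d

theorem mul_eq_mul_diagonal_iff [CommRing K] {A M : Matrix n n K} {d : n → K} :
    A * M = M * diagonal d ↔ ∀ k, A *ᵥ M.col k = d k • M.col k := by
  simp only [← Matrix.ext_iff, mul_diagonal]
  simp only [funext_iff, mulVec, dotProduct, col_apply, Pi.smul_apply, smul_eq_mul, mul_apply,
    mul_comm (d _)]
  exact forall_comm

theorem IsHermitian.isDiagonalizable [RCLike K] {A : Matrix n n K} (hA : A.IsHermitian) :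
    A.IsDiagonalizable :=
  ⟨hA.eigenvectorUnitary, Unitary.isUnit_coe, RCLike.ofReal ∘ hA.eigenvalues,
    mul_eq_mul_diagonal_iff.2 fun k => by
      rw [IsHermitian.eigenvectorUnitary_col_eq, hA.mulVec_eigenvectorBasis k, Function.comp_apply,
        RCLike.real_smul_eq_coe_smul (K := K)]⟩

theorem IsDiagonalizable.of_mul_eq_mul [CommRing K] {A B S : Matrix n n K} (hS : IsUnit S)
    (hAB : A * S = S * B) (hB : B.IsDiagonalizable) : A.IsDiagonalizable := by
  obtain ⟨M, hM, d, hBM⟩ := hB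
  exact ⟨S * M, hS.mul hM, d, by rw [← Matrix.mul_assoc, hAB, Matrix.mul_assoc, hBM,
    Matrix.mul_assoc]⟩

theorem isDiagonalizable_of_reversible {Q : Matrix n n ℝ} {w : n → ℝ} (hw : ∀ i, 0 < w i)
    (hrev : ∀ i j, w i * Q i j = w j * Q j i) : Q.IsDiagonalizable := by
  set s : n → ℝ := fun i => √(w i)
  have hs : ∀ i, s i ≠ 0 := fun i => (Real.sqrt_pos.2 (hw i)).ne'
  have hss : ∀ i, s i * s i = w i := fun i => Real.mul_self_sqrt (hw i).le
  set T := diagonal s * Q * diagonal s⁻¹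
  have hT : T.IsHermitian := by
    ext i j
    simp only [T, conjTranspose_apply, star_trivial, diagonal_mul, mul_diagonal, Pi.inv_apply]
    field_simp [hs i, hs j]
    linear_combination Q j i * hss j - Q i j * hss i - hrev i j
  have hinv : diagonal s⁻¹ * diagonal s = 1 := by
    rw [diagonal_mul_diagonal, ← diagonal_one]
    exact congrArg diagonal (funext fun i => inv_mul_cancel₀ (hs i))
  refine hT.isDiagonalizable.of_mul_eq_mul (S := diagonal s⁻¹)
    (isUnit_diagonal.2 (Pi.isUnit_iff.2 fun i => (hs i).isUnit.inv)) ?_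
  rw [← Matrix.mul_assoc, ← Matrix.mul_assoc, hinv, Matrix.one_mul]

end Matrix

theorem normal_similar_birthdeath_selfadjoint_general (n : ℕ)
    (P Q Λ : Matrix (Fin n) (Fin n) ℝ) (π πQ : Fin n → ℝ)
    (hπ : ∀ i, 0 < π i) (hπQ : ∀ i, 0 < πQ i)
    (hrevQ : ∀ i j, πQ i * Q i j = πQ j * Q j i)
    (hΛ : IsUnit Λ) (hint : P * Λ = Λ * Q)
    (Phat : Matrix (Fin n) (Fin n) ℝ)
    (hPhat : Phat = Matrix.of fun x y => π y * P y x / π x)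
    (hnormal : P * Phat = Phat * P) :
    P = Phat := by
  obtain ⟨M, hM, d, hPM⟩ := (isDiagonalizable_of_reversible hπQ hrevQ).of_mul_eq_mul hΛ hint
  have hadj : diagonal π * Phat = Pᵀ * diagonal π := by
    ext i j
    simp only [hPhat, diagonal_mul, of_apply, mul_diagonal, transpose_apply]
    field_simp [(hπ i).ne']
  have hPhatM : Phat * M = M * diagonal d :=
    mul_eq_mul_diagonal_iff.2 fun k => mulVec_eq_smul_of_adjoint_of_commute
      (posDef_diagonal_iff.2 hπ) hadj hnormal (mul_eq_mul_diagonal_iff.1 hPM k)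
  exact hM.mul_left_inj.1 (hPM.trans hPhatM.symm)

/-- A stochastic matrix similar to a (reversible) birth-death matrix which is moreover
normal with respect to the `π`-inner product must be self-adjoint : `P = P̂`. -/
theorem normal_similar_birthdeath_selfadjoint (n : ℕ)
    (P Q Λ : Matrix (Fin n) (Fin n) ℝ) (π πQ : Fin n → ℝ)
    (hPnn : ∀ i j, 0 ≤ P i j) (hProw : ∀ i, ∑ j, P i j = 1)
    (hπ : ∀ i, 0 < π i) (hπQ : ∀ i, 0 < πQ i)
    (hBD : IsBirthDeath Q)
    (hrevQ : ∀ i j, πQ i * Q i j = πQ j * Q j i)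
    (hΛ : IsUnit Λ) (hint : P * Λ = Λ * Q)
    (Phat : Matrix (Fin n) (Fin n) ℝ)
    (hPhat : Phat = Matrix.of fun x y => π y * P y x / π x)
    (hnormal : P * Phat = Phat * P) :
    P = Phat :=
  normal_similar_birthdeath_selfadjoint_general n P Q Λ π πQ hπ hπQ hrevQ hΛ hint Phat hPhat hnormal
end

section
/- Let P be a finite stochastic matrix with PΛ = ΛQ for Q an ergodic birth-death transition matrix and Λ invertible. If h is excessive for P (Ph ≤ h, h ≥ 0), then the Doob transform P^h defined by P^h(x,y) = p(x,y)h(y)/h(x) satisfies P^h Λ^h = Λ^h Q with Λ^h = D_h^{-1} Λ, where D_h is the diagonal matrix of h. Hence the similarity class S is stable under Doob transforms. -/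
open scoped BigOperators

/-- Ergodicity (primitivity) of a nonnegative matrix. -/
def IsErgodic {n : ℕ} (Q : Matrix (Fin n) (Fin n) ℝ) : Prop :=
  ∃ m : ℕ, ∀ i j, 0 < (Q ^ m) i j

/-!
Writing `D` for the diagonal matrix of `h`, the Doob transform is the conjugate `D⁻¹ P D` and
`Λʰ = D⁻¹ Λ`, so `Pʰ Λʰ = D⁻¹ P D D⁻¹ Λ = D⁻¹ P Λ = D⁻¹ Λ Q = Λʰ Q`: a semiconjugacy
identity valid in any monoid once `D` has a right inverse.
-/

theorem SemiconjBy.inv_mul_conj {M : Type*} [Monoid M] {a x y d d' : M}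
    (hsemi : SemiconjBy a x y) (hd : d * d' = 1) : SemiconjBy (d' * a) x (d' * y * d) := by
  unfold SemiconjBy at hsemi ⊢
  calc d' * a * x = d' * (y * a) := by rw [mul_assoc, hsemi]
    _ = d' * y * (d * d') * a := by rw [hd, mul_one, mul_assoc]
    _ = d' * y * d * (d' * a) := by simp only [mul_assoc]

namespace Matrix

variable {ι K : Type*} [Fintype ι] [DecidableEq ι] [Field K]

theorem of_mul_div_eq_diagonal_inv_mul_mul_diagonal (P : Matrix ι ι K) (h : ι → K) :
    of (fun x y => P x y * h y / h x) = diagonal h⁻¹ * P * diagonal h := by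
  ext x y
  simp only [of_apply, mul_diagonal, diagonal_mul, Pi.inv_apply]
  ring

theorem of_div_eq_diagonal_inv_mul (Λ : Matrix ι ι K) (h : ι → K) :
    of (fun x j => Λ x j / h x) = diagonal h⁻¹ * Λ := by
  ext x j
  simp only [of_apply, diagonal_mul, Pi.inv_apply]
  ring

theorem diagonal_mul_diagonal_inv {h : ι → K} (hh : ∀ x, h x ≠ 0) :
    diagonal h * diagonal h⁻¹ = 1 := by
  rw [diagonal_mul_diagonal, ← diagonal_one]
  exact congrArg diagonal (funext fun x => mul_inv_cancel₀ (hh x))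

end Matrix

theorem doob_transform_similarity_general (n : ℕ)
    (P Q Λ : Matrix (Fin n) (Fin n) ℝ)
    (hint : P * Λ = Λ * Q)
    (h : Fin n → ℝ)
    (hpos : ∀ x, 0 < h x)
    (Ph : Matrix (Fin n) (Fin n) ℝ)
    (hPh : Ph = Matrix.of fun x y => P x y * h y / h x)
    (Λh : Matrix (Fin n) (Fin n) ℝ)
    (hΛh : Λh = Matrix.of fun x j => Λ x j / h x) :
    Ph * Λh = Λh * Q := by
  rw [hPh, hΛh, Matrix.of_mul_div_eq_diagonal_inv_mul_mul_diagonal,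
    Matrix.of_div_eq_diagonal_inv_mul]
  have hD := Matrix.diagonal_mul_diagonal_inv fun x => (hpos x).ne'
  exact ((SemiconjBy.inv_mul_conj hint.symm hD).eq).symm

/-- The similarity class is stable under Doob transforms : if `PΛ = ΛQ` and `h` is
excessive for `P`, then `P^h Λ^h = Λ^h Q` with `Λ^h = D_h^{-1} Λ`. -/
theorem doob_transform_similarity (n : ℕ)
    (P Q Λ : Matrix (Fin n) (Fin n) ℝ)
    (hPnn : ∀ i j, 0 ≤ P i j) (hProw : ∀ i, ∑ j, P i j = 1)
    (hBD : IsBirthDeath Q) (hQerg : IsErgodic Q)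
    (hΛ : IsUnit Λ) (hint : P * Λ = Λ * Q)
    (h : Fin n → ℝ)
    (hh0 : ∀ x, 0 ≤ h x)
    (hexc : ∀ x, P.mulVec h x ≤ h x)
    (hpos : ∀ x, 0 < h x)
    (Ph : Matrix (Fin n) (Fin n) ℝ)
    (hPh : Ph = Matrix.of fun x y => P x y * h y / h x)
    (Λh : Matrix (Fin n) (Fin n) ℝ)
    (hΛh : Λh = Matrix.of fun x j => Λ x j / h x) :
    Ph * Λh = Λh * Q :=
  doob_transform_similarity_general n P Q Λ hint h hpos Ph hPh Λh hΛh
end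

section
/- Let P be an ergodic stochastic matrix on a finite state space with stationary distribution π, satisfying PΛ = ΛQ for an ergodic reversible birth-death matrix Q and bounded invertible Λ. Then for all n ≥ 0: λ_*^n ≤ ‖P^n − π‖_{ℓ²(π)→ℓ²(π)} ≤ κ(Λ) λ_*^n, where λ_* is the second largest eigenvalue modulus of P and κ(Λ) = ‖Λ‖_op ‖Λ^{-1}‖_op is the condition number. -/
open scoped BigOperators
open Polynomial

/-- The `ℓ²(w)` norm of `f`. -/
noncomputable def wNorm {n : ℕ} (w f : Fin n → ℝ) : ℝ :=
  Real.sqrt (∑ x, f x ^ 2 * w x)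

/-- The operator norm of a matrix from `ℓ²(win)` to `ℓ²(wout)`. -/
noncomputable def wOpNorm {n : ℕ} (win wout : Fin n → ℝ)
    (A : Matrix (Fin n) (Fin n) ℝ) : ℝ :=
  sSup {r : ℝ | ∃ f : Fin n → ℝ, wNorm win f = 1 ∧ r = wNorm wout (A.mulVec f)}

/-!
Conjugating by `√πQ` turns the reversible chain `Q` into a symmetric matrix, whose orthonormal
eigenbasis diagonalises `Qᴺ - B` for `B = Λ⁻¹ Π Λ`: `B` is the identity on the fixed vectors of
`Q` (the constants, by the maximum principle along the birth-death path) and, as `B Q = B`,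
kills every other eigenvector, so `‖Qᴺ - B‖_{ℓ²(πQ)} ≤ λ_*ᴺ`, the eigenvalues of `Q` being
those of `P`. Since `Pᴺ - Π = Λ (Qᴺ - B) Λ⁻¹`, submultiplicativity of the weighted operator
norms gives the upper bound. For the lower bound, an eigenvector `x` of `P` for an eigenvalue
`λ ≠ 1` satisfies `Π x = 0` by stationarity, so `(Pᴺ - Π) x = λᴺ x`.
-/

open Matrix WithLp

namespace Matrix

variable {K ι : Type*} [Field K] [Fintype ι]

theorem exists_mulVec_eq_smul_iff_isRoot_charpoly [DecidableEq ι] (A : Matrix ι ι K) (t : K) :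
    (∃ v ≠ 0, A *ᵥ v = t • v) ↔ A.charpoly.IsRoot t := by
  rw [IsRoot.def, eval_charpoly, ← exists_mulVec_eq_zero_iff]
  simp only [sub_mulVec, scalar_apply, ← smul_one_eq_diagonal, smul_mulVec, one_mulVec,
    sub_eq_zero, eq_comm]

theorem exists_mulVec_eq_smul_iff_of_charpoly_eq_prod [DecidableEq ι] {A : Matrix ι ι K}
    {lam : ι → K} (hA : A.charpoly = ∏ i, (X - C (lam i))) (t : K) :
    (∃ v ≠ 0, A *ᵥ v = t • v) ↔ ∃ i, lam i = t := by
  rw [exists_mulVec_eq_smul_iff_isRoot_charpoly, hA, isRoot_prod]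
  simp [sub_eq_zero, eq_comm]

theorem mulVec_eq_zero_of_mul_eq_self {E A : Matrix ι ι K} (hEA : E * A = E) {v : ι → K} {t : K}
    (hv : A *ᵥ v = t • v) (ht : t ≠ 1) : E *ᵥ v = 0 := by
  have h : E *ᵥ v = t • E *ᵥ v := by rw [← mulVec_smul, ← hv, mulVec_mulVec, hEA]
  have : (1 - t) • E *ᵥ v = 0 := by rw [sub_smul, one_smul, ← h, sub_self]
  exact (smul_eq_zero.mp this).resolve_left (sub_ne_zero.mpr ht.symm)

theorem mulVec_mulVec_eq_smul_of_mul_eq_mul {A B X : Matrix ι ι K} (h : A * X = X * B)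
    {v : ι → K} {t : K} (hv : B *ᵥ v = t • v) : A *ᵥ (X *ᵥ v) = t • X *ᵥ v := by
  rw [mulVec_mulVec, h, ← mulVec_mulVec, hv, mulVec_smul]

theorem pow_mulVec_eq_pow_smul [DecidableEq ι] {A : Matrix ι ι K} {v : ι → K} {t : K}
    (hv : A *ᵥ v = t • v) (N : ℕ) : (A ^ N) *ᵥ v = t ^ N • v := by
  induction N with
  | zero => simp
  | succ N ih => rw [pow_succ, ← mulVec_mulVec, hv, mulVec_smul, ih, smul_smul, pow_succ']

theorem pow_sub_mulVec_eq_smul [DecidableEq K] [DecidableEq ι] {Q B : Matrix ι ι K}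
    (hfix : ∀ g, Q *ᵥ g = g → B *ᵥ g = g) (hBQ : B * Q = B) {v : ι → K} {μ : K}
    (hv : Q *ᵥ v = μ • v) (N : ℕ) : (Q ^ N - B) *ᵥ v = (if μ = 1 then 0 else μ ^ N) • v := by
  rw [sub_mulVec, pow_mulVec_eq_pow_smul hv]
  split_ifs with hμ
  · rw [hfix v (by rw [hv, hμ, one_smul]), hμ, one_pow, one_smul, sub_self, zero_smul]
  · rw [mulVec_eq_zero_of_mul_eq_self hBQ hv hμ, sub_zero]

theorem nonsing_inv_conj_mul [DecidableEq ι] {Λ : Matrix ι ι K} (hΛ : IsUnit Λ.det)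
    (A B : Matrix ι ι K) : Λ⁻¹ * A * Λ * (Λ⁻¹ * B * Λ) = Λ⁻¹ * (A * B) * Λ := by
  simp only [Matrix.mul_assoc, mul_nonsing_inv_cancel_left _ _ hΛ]

end Matrix

section RankOne

variable {R ι : Type*} [Semiring R] [Fintype ι] {P : Matrix ι ι R}

theorem Matrix.mul_of_const_of_sum_row_eq_one (hP : ∀ i, ∑ j, P i j = 1) (π : ι → R) :
    P * (of fun _ y => π y : Matrix ι ι R) = of fun _ y => π y := by
  ext i j
  simp [mul_apply, ← Finset.sum_mul, hP]

theorem Matrix.of_const_mul_of_stationary {π : ι → R} (hstat : ∀ j, ∑ i, π i * P i j = π j) :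
    (of fun _ y => π y : Matrix ι ι R) * P = of fun _ y => π y := by
  ext i j
  simp [mul_apply, hstat]

end RankOne

theorem ContinuousLinearMap.norm_le_of_orthonormalBasis_eigenvectors {𝕜 ι E : Type*} [RCLike 𝕜]
    [Fintype ι] [NormedAddCommGroup E] [InnerProductSpace 𝕜 E] (T : E →L[𝕜] E)
    (b : OrthonormalBasis ι 𝕜 E) (ν : ι → 𝕜) {m : ℝ} (hm : 0 ≤ m)
    (hT : ∀ i, T (b i) = ν i • b i) (hν : ∀ i, ‖ν i‖ ≤ m) : ‖T‖ ≤ m := by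
  refine T.opNorm_le_bound hm fun x => ?_
  have hTx : T x = b.repr.symm (toLp 2 fun i => ν i * b.repr x i) := by
    conv_lhs => rw [← b.sum_repr x]
    simp [← b.sum_repr_symm, map_sum, hT, smul_smul, mul_comm]
  rw [hTx, LinearIsometryEquiv.norm_map, ← b.repr.norm_map x, EuclideanSpace.norm_eq,
    EuclideanSpace.norm_eq, ← Real.sqrt_sq hm, ← Real.sqrt_mul (sq_nonneg m), Finset.mul_sum]
  gcongr with i
  simp only [norm_mul, mul_pow]
  gcongr
  exact hν i

noncomputable def sqrtDiag {n : ℕ} (w : Fin n → ℝ) : Matrix (Fin n) (Fin n) ℝ :=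
  diagonal fun x => √(w x)

section Weighted

variable {n : ℕ} {w w₁ w₂ w₃ : Fin n → ℝ}

theorem sqrtDiag_mul_sqrtDiag_inv (hw : ∀ x, 0 < w x) : sqrtDiag w * sqrtDiag w⁻¹ = 1 := by
  rw [sqrtDiag, sqrtDiag, diagonal_mul_diagonal, ← diagonal_one]
  congr 1
  funext x
  rw [Pi.inv_apply, Real.sqrt_inv, mul_inv_cancel₀ (Real.sqrt_pos.mpr (hw x)).ne']

theorem sqrtDiag_inv_mul_sqrtDiag (hw : ∀ x, 0 < w x) : sqrtDiag w⁻¹ * sqrtDiag w = 1 := by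
  simpa using sqrtDiag_mul_sqrtDiag_inv (w := w⁻¹) fun x => inv_pos.mpr (hw x)

theorem wNorm_eq_norm_sqrtDiag_mulVec (hw : ∀ x, 0 < w x) (f : Fin n → ℝ) :
    wNorm w f = ‖toLp 2 (sqrtDiag w *ᵥ f)‖ := by
  rw [wNorm, EuclideanSpace.norm_eq]
  congr 1
  refine Finset.sum_congr rfl fun x _ => ?_
  rw [sqrtDiag, PiLp.toLp_apply, mulVec_diagonal, Real.norm_eq_abs, sq_abs, mul_pow,
    Real.sq_sqrt (hw x).le, mul_comm]

theorem wOpNorm_eq_norm_toEuclideanCLM (hw₁ : ∀ x, 0 < w₁ x) (hw₂ : ∀ x, 0 < w₂ x)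
    (A : Matrix (Fin n) (Fin n) ℝ) :
    wOpNorm w₁ w₂ A = ‖toEuclideanCLM (𝕜 := ℝ) (sqrtDiag w₂ * A * sqrtDiag w₁⁻¹)‖ := by
  rw [← ContinuousLinearMap.sSup_sphere_eq_norm, wOpNorm]
  congr 1
  ext r
  simp only [Set.mem_ofPred_eq, Set.mem_image, mem_sphere_zero_iff_norm]
  constructor
  · rintro ⟨f, hf, rfl⟩
    refine ⟨toLp 2 (sqrtDiag w₁ *ᵥ f), by rwa [← wNorm_eq_norm_sqrtDiag_mulVec hw₁], ?_⟩
    rw [toEuclideanCLM_toLp, wNorm_eq_norm_sqrtDiag_mulVec hw₂, mulVec_mulVec,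
      Matrix.mul_assoc, sqrtDiag_inv_mul_sqrtDiag hw₁, Matrix.mul_one, ← mulVec_mulVec]
  · rintro ⟨g, hg, rfl⟩
    refine ⟨sqrtDiag w₁⁻¹ *ᵥ ofLp g, ?_, ?_⟩
    · rwa [wNorm_eq_norm_sqrtDiag_mulVec hw₁, mulVec_mulVec, sqrtDiag_mul_sqrtDiag_inv hw₁,
        one_mulVec, toLp_ofLp]
    · rw [wNorm_eq_norm_sqrtDiag_mulVec hw₂, mulVec_mulVec, mulVec_mulVec,
        ← toEuclideanCLM_toLp, toLp_ofLp]

theorem wOpNorm_nonneg (hw₁ : ∀ x, 0 < w₁ x) (hw₂ : ∀ x, 0 < w₂ x)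
    (A : Matrix (Fin n) (Fin n) ℝ) : 0 ≤ wOpNorm w₁ w₂ A :=
  (wOpNorm_eq_norm_toEuclideanCLM hw₁ hw₂ A).symm ▸ norm_nonneg _

theorem wOpNorm_mul_le (hw₁ : ∀ x, 0 < w₁ x) (hw₂ : ∀ x, 0 < w₂ x) (hw₃ : ∀ x, 0 < w₃ x)
    (A B : Matrix (Fin n) (Fin n) ℝ) :
    wOpNorm w₁ w₃ (A * B) ≤ wOpNorm w₂ w₃ A * wOpNorm w₁ w₂ B := by
  rw [wOpNorm_eq_norm_toEuclideanCLM hw₁ hw₃, wOpNorm_eq_norm_toEuclideanCLM hw₂ hw₃,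
    wOpNorm_eq_norm_toEuclideanCLM hw₁ hw₂]
  refine le_of_eq_of_le ?_ (norm_mul_le _ _)
  rw [← map_mul]
  simp only [Matrix.mul_assoc]
  rw [← Matrix.mul_assoc (sqrtDiag w₂⁻¹), sqrtDiag_inv_mul_sqrtDiag hw₂, Matrix.one_mul]

theorem abs_le_wOpNorm_of_mulVec_eq_smul (hw : ∀ x, 0 < w x) {A : Matrix (Fin n) (Fin n) ℝ}
    {v : Fin n → ℝ} {t : ℝ} (hv0 : v ≠ 0) (hv : A *ᵥ v = t • v) : |t| ≤ wOpNorm w w A := by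
  rw [wOpNorm_eq_norm_toEuclideanCLM hw hw]
  set u := toLp 2 (sqrtDiag w *ᵥ v)
  have hu : u ≠ 0 := by
    intro h
    apply hv0
    simpa [u, mulVec_mulVec, sqrtDiag_inv_mul_sqrtDiag hw] using
      congrArg (fun y => sqrtDiag w⁻¹ *ᵥ ofLp y) h
  have hTu : toEuclideanCLM (𝕜 := ℝ) (sqrtDiag w * A * sqrtDiag w⁻¹) u = t • u := by
    rw [toEuclideanCLM_toLp, mulVec_mulVec, Matrix.mul_assoc, Matrix.mul_assoc,
      sqrtDiag_inv_mul_sqrtDiag hw, Matrix.mul_one, ← mulVec_mulVec, hv, mulVec_smul]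
    rfl
  have := (toEuclideanCLM (𝕜 := ℝ) (sqrtDiag w * A * sqrtDiag w⁻¹)).le_opNorm u
  rw [hTu, norm_smul, Real.norm_eq_abs] at this
  exact le_of_mul_le_mul_right this (norm_pos_iff.mpr hu)

theorem pow_abs_le_wOpNorm_pow_sub (hw : ∀ x, 0 < w x) {P Pi : Matrix (Fin n) (Fin n) ℝ}
    (hPiP : Pi * P = Pi) {v : Fin n → ℝ} {t : ℝ} (hv0 : v ≠ 0) (hv : P *ᵥ v = t • v) (ht : t ≠ 1)
    (N : ℕ) : |t| ^ N ≤ wOpNorm w w (P ^ N - Pi) := by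
  rw [← abs_pow]
  refine abs_le_wOpNorm_of_mulVec_eq_smul hw hv0 ?_
  rw [sub_mulVec, pow_mulVec_eq_pow_smul hv, mulVec_eq_zero_of_mul_eq_self hPiP hv ht, sub_zero]

theorem isHermitian_sqrtDiag_mul_mul_sqrtDiag_inv (hw : ∀ x, 0 < w x)
    {Q : Matrix (Fin n) (Fin n) ℝ} (hrev : ∀ i j, w i * Q i j = w j * Q j i) :
    (sqrtDiag w * Q * sqrtDiag w⁻¹).IsHermitian := by
  ext i j
  have hi := Real.sqrt_pos.mpr (hw i)
  have hj := Real.sqrt_pos.mpr (hw j)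
  simp only [sqrtDiag, conjTranspose_apply, mul_diagonal, diagonal_mul, star_trivial,
    Pi.inv_apply, Real.sqrt_inv]
  field_simp
  rw [Real.sq_sqrt (hw i).le, Real.sq_sqrt (hw j).le]
  linear_combination -hrev i j

theorem wOpNorm_pow_sub_le (hw : ∀ x, 0 < w x) {Q B : Matrix (Fin n) (Fin n) ℝ}
    (hrev : ∀ i j, w i * Q i j = w j * Q j i) (hfix : ∀ g, Q *ᵥ g = g → B *ᵥ g = g)
    (hBQ : B * Q = B) {m : ℝ} (hm : 0 ≤ m)
    (heig : ∀ (μ : ℝ) (v : Fin n → ℝ), v ≠ 0 → Q *ᵥ v = μ • v → μ ≠ 1 → |μ| ≤ m) (N : ℕ) :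
    wOpNorm w w (Q ^ N - B) ≤ m ^ N := by
  have hS := isHermitian_sqrtDiag_mul_mul_sqrtDiag_inv hw hrev
  set b := hS.eigenvectorBasis
  set v : Fin n → Fin n → ℝ := fun i => sqrtDiag w⁻¹ *ᵥ b i
  have hv0 (i : Fin n) : v i ≠ 0 := by
    intro h
    have hb := congrArg (sqrtDiag w *ᵥ ·) h
    simp only [v, mulVec_mulVec, sqrtDiag_mul_sqrtDiag_inv hw, one_mulVec, mulVec_zero] at hb
    exact b.orthonormal.ne_zero i (by simpa using congrArg (toLp 2) hb)
  have hQv (i : Fin n) : Q *ᵥ v i = hS.eigenvalues i • v i := by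
    refine mulVec_mulVec_eq_smul_of_mul_eq_mul ?_ (hS.mulVec_eigenvectorBasis i)
    simp only [← Matrix.mul_assoc, sqrtDiag_inv_mul_sqrtDiag hw, Matrix.one_mul]
  rw [wOpNorm_eq_norm_toEuclideanCLM hw hw]
  refine ContinuousLinearMap.norm_le_of_orthonormalBasis_eigenvectors _ b
    (fun i => if hS.eigenvalues i = 1 then 0 else hS.eigenvalues i ^ N) (pow_nonneg hm N)
    (fun i => ?_) (fun i => ?_)
  · apply ofLp_injective 2
    rw [ofLp_toEuclideanCLM, ofLp_smul, ← mulVec_mulVec, ← mulVec_mulVec,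
      pow_sub_mulVec_eq_smul hfix hBQ (hQv i), mulVec_smul, mulVec_mulVec,
      sqrtDiag_mul_sqrtDiag_inv hw, one_mulVec]
  · split_ifs with hμ
    · simpa using pow_nonneg hm N
    · rw [Real.norm_eq_abs, abs_pow]
      exact pow_le_pow_left₀ (abs_nonneg _) (heig _ _ (hv0 i) (hQv i) hμ) N

end Weighted

theorem eq_of_mulVec_eq_self_of_forall_le {ι : Type*} [Fintype ι] {A : Matrix ι ι ℝ}
    (hA : ∀ i j, 0 ≤ A i j) (hrow : ∀ i, ∑ j, A i j = 1) {g : ι → ℝ} (hg : A *ᵥ g = g)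
    {i j : ι} (hmax : ∀ y, g y ≤ g i) (hij : 0 < A i j) : g j = g i := by
  have hsum : ∑ y, A i y * (g i - g y) = 0 := by
    simp only [mul_sub, Finset.sum_sub_distrib, ← Finset.sum_mul, hrow, one_mul]
    have hgi := congrFun hg i
    simp only [mulVec, dotProduct] at hgi
    rw [hgi, sub_self]
  have hj := (Finset.sum_eq_zero_iff_of_nonneg fun y _ =>
    mul_nonneg (hA i y) (sub_nonneg.mpr (hmax y))).mp hsum j (Finset.mem_univ j)
  linarith [(mul_eq_zero.mp hj).resolve_left hij.ne']

namespace IsBirthDeath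

variable {n : ℕ} {Q : Matrix (Fin n) (Fin n) ℝ}

theorem eq_of_mulVec_eq_self (hQ : IsBirthDeath Q) {g : Fin n → ℝ} (hg : Q *ᵥ g = g)
    (i j : Fin n) : g i = g j := by
  obtain ⟨hnn, hrow, -, hadj⟩ := hQ
  obtain ⟨i₀, -, hmax⟩ := Finset.exists_max_image Finset.univ g ⟨i, Finset.mem_univ i⟩
  have hmax_of_eq {a : Fin n} (ha : g a = g i₀) (y : Fin n) : g y ≤ g a :=
    ha ▸ hmax y (Finset.mem_univ y)
  have hadj_iff {a b : Fin n} (hab : |(a : ℤ) - b| = 1) : g a = g i₀ ↔ g b = g i₀ :=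
    ⟨fun ha => (eq_of_mulVec_eq_self_of_forall_le hnn hrow hg (hmax_of_eq ha)
        (hadj a b hab)).trans ha,
      fun hb => (eq_of_mulVec_eq_self_of_forall_le hnn hrow hg (hmax_of_eq hb)
        (hadj b a (by rw [abs_sub_comm, hab]))).trans hb⟩
  suffices h : ∀ a, g a = g i₀ by rw [h i, h j]
  obtain _ | m := n
  · exact i.elim0
  have hzero : ∀ a : Fin (m + 1), g a = g i₀ ↔ g 0 = g i₀ := by
    refine Fin.induction Iff.rfl fun k hk => (hadj_iff ?_).symm.trans hk
    simp
  exact fun a => (hzero a).mpr ((hzero i₀).mp rfl)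

theorem mulVec_eq_self_of_mul_eq_self {B : Matrix (Fin n) (Fin n) ℝ} (hQ : IsBirthDeath Q)
    (hQB : Q * B = B) (hBB : B * B = B) (hB : B ≠ 0) {g : Fin n → ℝ} (hg : Q *ᵥ g = g) :
    B *ᵥ g = g := by
  have hconst {g : Fin n → ℝ} (hg : Q *ᵥ g = g) (i : Fin n) : g = g i • 1 :=
    funext fun j => by simp [hQ.eq_of_mulVec_eq_self hg j i]
  obtain ⟨x, hx⟩ : ∃ x, B *ᵥ x ≠ 0 := by
    by_contra! h
    exact hB (ext fun i j => by simpa using congrFun (h (Pi.single j 1)) i)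
  obtain ⟨i, hi⟩ := Function.ne_iff.mp hx
  -- `B *ᵥ x` is a nonzero constant vector fixed by `B`, so `B` fixes the constants.
  have hB1 : B *ᵥ 1 = 1 := by
    have hBx : B *ᵥ (B *ᵥ x) = B *ᵥ x := by rw [mulVec_mulVec, hBB]
    rw [hconst (g := B *ᵥ x) (by rw [mulVec_mulVec, hQB]) i, mulVec_smul] at hBx
    exact smul_right_injective _ hi hBx
  ext j
  rw [hconst hg j, mulVec_smul, hB1]

end IsBirthDeath

theorem wOpNorm_pow_sub_le_of_intertwining {n : ℕ} {P Q Λ Pi : Matrix (Fin n) (Fin n) ℝ}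
    {π πQ : Fin n → ℝ} (hπ : ∀ i, 0 < π i) (hπQ : ∀ i, 0 < πQ i) (hBD : IsBirthDeath Q)
    (hrevQ : ∀ i j, πQ i * Q i j = πQ j * Q j i) (hΛ : IsUnit Λ) (hint : P * Λ = Λ * Q)
    (hPPi : P * Pi = Pi) (hPiP : Pi * P = Pi) (hPiPi : Pi * Pi = Pi) (hPi0 : Pi ≠ 0)
    {m : ℝ} (hm : 0 ≤ m)
    (heig : ∀ (μ : ℝ) (v : Fin n → ℝ), v ≠ 0 → P *ᵥ v = μ • v → μ ≠ 1 → |μ| ≤ m) (N : ℕ) :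
    wOpNorm π π (P ^ N - Pi) ≤ wOpNorm πQ π Λ * wOpNorm π πQ Λ⁻¹ * m ^ N := by
  have hdet := (isUnit_iff_isUnit_det Λ).mp hΛ
  set B := Λ⁻¹ * Pi * Λ
  have hconj := nonsing_inv_conj_mul hdet
  have hQ : Q = Λ⁻¹ * P * Λ := by rw [Matrix.mul_assoc, hint, nonsing_inv_mul_cancel_left _ _ hdet]
  have hΛBΛ : Λ * B * Λ⁻¹ = Pi := by
    rw [← Matrix.mul_assoc Λ, mul_nonsing_inv_cancel_left _ _ hdet,
      mul_nonsing_inv_cancel_right _ _ hdet]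
  have hB0 : B ≠ 0 := fun h => hPi0 (by rw [← hΛBΛ, h, Matrix.mul_zero, Matrix.zero_mul])
  have hfix (g : Fin n → ℝ) (hg : Q *ᵥ g = g) : B *ᵥ g = g :=
    hBD.mulVec_eq_self_of_mul_eq_self (by rw [hQ, hconj, hPPi]) (by rw [hconj, hPiPi]) hB0 hg
  have heigQ (μ : ℝ) (v : Fin n → ℝ) (hv0 : v ≠ 0) (hv : Q *ᵥ v = μ • v) (hμ : μ ≠ 1) :
      |μ| ≤ m :=
    heig μ _ (fun h => hv0 (mulVec_injective_iff_isUnit.mpr hΛ (h.trans (mulVec_zero Λ).symm)))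
      (mulVec_mulVec_eq_smul_of_mul_eq_mul hint hv) hμ
  have hkey : P ^ N - Pi = Λ * (Q ^ N - B) * Λ⁻¹ := by
    rw [Matrix.mul_sub, Matrix.sub_mul, hΛBΛ, (SemiconjBy.pow_right hint.symm N).eq,
      mul_nonsing_inv_cancel_right _ _ hdet]
  rw [hkey]
  calc wOpNorm π π (Λ * (Q ^ N - B) * Λ⁻¹)
      ≤ wOpNorm πQ π Λ * wOpNorm πQ πQ (Q ^ N - B) * wOpNorm π πQ Λ⁻¹ :=
        (wOpNorm_mul_le hπ hπQ hπ _ _).trans <| mul_le_mul_of_nonneg_right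
          (wOpNorm_mul_le hπQ hπQ hπ _ _) (wOpNorm_nonneg hπ hπQ _)
    _ ≤ wOpNorm πQ π Λ * m ^ N * wOpNorm π πQ Λ⁻¹ := by
        have := wOpNorm_nonneg hπQ hπ Λ
        have := wOpNorm_nonneg hπ hπQ Λ⁻¹
        gcongr
        exact wOpNorm_pow_sub_le hπQ hrevQ hfix (by rw [hQ, hconj, hPiP]) hm heigQ N
    _ = wOpNorm πQ π Λ * wOpNorm π πQ Λ⁻¹ * m ^ N := by ring

theorem ell2_convergence_rate_general (n : ℕ)
    (P Q Λ : Matrix (Fin n) (Fin n) ℝ) (π πQ : Fin n → ℝ)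
    (hProw : ∀ i, ∑ j, P i j = 1)
    (hπ : ∀ i, 0 < π i) (hπsum : ∑ i, π i = 1)
    (hstat : ∀ j, ∑ i, π i * P i j = π j)
    (hπQ : ∀ i, 0 < πQ i)
    (hBD : IsBirthDeath Q)
    (hrevQ : ∀ i j, πQ i * Q i j = πQ j * Q j i)
    (hΛ : IsUnit Λ) (hint : P * Λ = Λ * Q)
    (lam : Fin n → ℝ)
    (hchar : P.charpoly = ∏ i, (X - Polynomial.C (lam i)))
    (lamStar : ℝ)
    (hstar1 : ∀ i, lam i ≠ 1 → |lam i| ≤ lamStar)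
    (hstar2 : ∃ i, lam i ≠ 1 ∧ |lam i| = lamStar)
    (Pi : Matrix (Fin n) (Fin n) ℝ) (hPi : Pi = Matrix.of fun _ y => π y)
    (κ : ℝ) (hκ : κ = wOpNorm πQ π Λ * wOpNorm π πQ Λ⁻¹)
    (N : ℕ) :
    lamStar ^ N ≤ wOpNorm π π (P ^ N - Pi) ∧
      wOpNorm π π (P ^ N - Pi) ≤ κ * lamStar ^ N := by
  obtain ⟨i₀, hi₀, rfl⟩ := hstar2
  have heigP := exists_mulVec_eq_smul_iff_of_charpoly_eq_prod hchar
  have hPiP : Pi * P = Pi := hPi ▸ of_const_mul_of_stationary hstat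
  constructor
  · obtain ⟨v, hv0, hv⟩ := (heigP _).mpr ⟨i₀, rfl⟩
    exact pow_abs_le_wOpNorm_pow_sub hπ hPiP hv0 hv hi₀ N
  have hPPi : P * Pi = Pi := hPi ▸ mul_of_const_of_sum_row_eq_one hProw π
  have hPiPi : Pi * Pi = Pi := hPi ▸ mul_of_const_of_sum_row_eq_one (by simp [hπsum]) π
  have hPi0 : Pi ≠ 0 := fun h => (hπ i₀).ne' (by simpa [hPi] using congrFun (congrFun h i₀) i₀)
  have heig (μ : ℝ) (v : Fin n → ℝ) (hv0 : v ≠ 0) (hv : P *ᵥ v = μ • v) (hμ : μ ≠ 1) :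
      |μ| ≤ |lam i₀| := by
    obtain ⟨j, rfl⟩ := (heigP μ).mp ⟨v, hv0, hv⟩
    exact hstar1 j hμ
  rw [hκ]
  exact wOpNorm_pow_sub_le_of_intertwining hπ hπQ hBD hrevQ hΛ hint hPPi hPiP hPiPi hPi0
    (abs_nonneg _) heig N

/-- `ℓ²(π)` convergence to equilibrium for an ergodic chain in the class `𝒮` :
`λ_*^n ≤ ‖Pⁿ − π‖_{ℓ²(π)→ℓ²(π)} ≤ κ(Λ) λ_*^n` for all `n ≥ 0`. -/
theorem ell2_convergence_rate (n : ℕ) (hn : 0 < n)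
    (P Q Λ : Matrix (Fin n) (Fin n) ℝ) (π πQ : Fin n → ℝ)
    (hPnn : ∀ i j, 0 ≤ P i j) (hProw : ∀ i, ∑ j, P i j = 1)
    (hπ : ∀ i, 0 < π i) (hπsum : ∑ i, π i = 1)
    (hstat : ∀ j, ∑ i, π i * P i j = π j)
    (herg : ∃ m : ℕ, ∀ i j, 0 < (P ^ m) i j)
    (hπQ : ∀ i, 0 < πQ i)
    (hBD : IsBirthDeath Q)
    (hrevQ : ∀ i j, πQ i * Q i j = πQ j * Q j i)
    (hΛ : IsUnit Λ) (hint : P * Λ = Λ * Q)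
    (lam : Fin n → ℝ)
    (hchar : P.charpoly = ∏ i, (X - Polynomial.C (lam i)))
    (lamStar : ℝ)
    (hstar1 : ∀ i, lam i ≠ 1 → |lam i| ≤ lamStar)
    (hstar2 : ∃ i, lam i ≠ 1 ∧ |lam i| = lamStar)
    (Pi : Matrix (Fin n) (Fin n) ℝ) (hPi : Pi = Matrix.of fun _ y => π y)
    (κ : ℝ) (hκ : κ = wOpNorm πQ π Λ * wOpNorm π πQ Λ⁻¹)
    (N : ℕ) :
    lamStar ^ N ≤ wOpNorm π π (P ^ N - Pi) ∧
      wOpNorm π π (P ^ N - Pi) ≤ κ * lamStar ^ N :=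
  ell2_convergence_rate_general n P Q Λ π πQ hProw hπ hπsum hstat hπQ hBD hrevQ hΛ hint lam hchar
    lamStar hstar1 hstar2 Pi hPi κ hκ N
end
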